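/- Single-letter secrecy converse step: for finite random variables M, Z^n = (Z_1,...,Z_n), Y^n = (Y_1,...,Y_n) with memoryless channel p(y^n, z^n | x^n) = Π p(y_i, z_i | x_i) and (M, Y^{i+1..n}, Z^{i-1}, Z_{i+1..n}) → X_i → (Y_i, Z_i) Markov for each i, one has I(M; Y^n | Z^n) ≤ Σ_{i=1}^n I(X_i; Y_i | Z_i). -/

import Mathlib

/-!
By the chain rule, `I(M; Yⁿ | Zⁿ) = ∑ᵢ I(M; Yᵢ | Y_{>i}, Zⁿ)`. Moving the side information
`(Y_{>i}, Z_{<i}, Z_{>i})` out of the conditioning and into the first argument can only increase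
each term, and the Markov chain `(M, Y_{>i}, Z_{<i}, Z_{>i}) → Xᵢ → (Yᵢ, Zᵢ)` then bounds it by
`I(Xᵢ; Yᵢ | Zᵢ)` (data processing). Both steps rest on the nonnegativity of conditional mutual
information, which is Gibbs' inequality.
-/

open scoped Classical BigOperators

namespace SecBC

variable {Ω : Type*} [Fintype Ω]

/-- Probability that the random variable `X` takes value `a`, under pmf `p` on `Ω`. -/
noncomputable def prob (p : Ω → ℝ) {A : Type*} [Fintype A] [DecidableEq A]
    (X : Ω → A) (a : A) : ℝ := ∑ ω, if X ω = a then p ω else 0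

/-- Shannon entropy of a random variable. -/
noncomputable def ent (p : Ω → ℝ) {A : Type*} [Fintype A] [DecidableEq A]
    (X : Ω → A) : ℝ := -∑ a, prob p X a * Real.log (prob p X a)

/-- Conditional Shannon entropy `H(X | Y)`. -/
noncomputable def condEnt (p : Ω → ℝ) {A B : Type*} [Fintype A] [DecidableEq A]
    [Fintype B] [DecidableEq B] (X : Ω → A) (Y : Ω → B) : ℝ :=
  ent p (fun ω => (X ω, Y ω)) - ent p Y

/-- Mutual information `I(X ; Y)`. -/
noncomputable def mutInfo (p : Ω → ℝ) {A B : Type*} [Fintype A] [DecidableEq A]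
    [Fintype B] [DecidableEq B] (X : Ω → A) (Y : Ω → B) : ℝ :=
  ent p X + ent p Y - ent p (fun ω => (X ω, Y ω))

/-- Conditional mutual information `I(X ; Y | Z)`. -/
noncomputable def condMutInfo (p : Ω → ℝ) {A B C : Type*} [Fintype A] [DecidableEq A]
    [Fintype B] [DecidableEq B] [Fintype C] [DecidableEq C]
    (X : Ω → A) (Y : Ω → B) (Z : Ω → C) : ℝ :=
  condEnt p X Z + condEnt p Y Z - condEnt p (fun ω => (X ω, Y ω)) Z

/-- Independence of two random variables. -/
def IndepRV (p : Ω → ℝ) {A B : Type*} [Fintype A] [DecidableEq A]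
    [Fintype B] [DecidableEq B] (X : Ω → A) (Y : Ω → B) : Prop :=
  ∀ a b, prob p (fun ω => (X ω, Y ω)) (a, b) = prob p X a * prob p Y b

/-- Markov chain `X → Y → Z`: conditional independence of `X` and `Z` given `Y`. -/
def MarkovChain (p : Ω → ℝ) {A B C : Type*} [Fintype A] [DecidableEq A]
    [Fintype B] [DecidableEq B] [Fintype C] [DecidableEq C]
    (X : Ω → A) (Y : Ω → B) (Z : Ω → C) : Prop :=
  ∀ a b c, prob p (fun ω => (X ω, Y ω, Z ω)) (a, b, c) * prob p Y b
    = prob p (fun ω => (X ω, Y ω)) (a, b) * prob p (fun ω => (Y ω, Z ω)) (b, c)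

/-- `p` is a probability mass function on the finite sample space `Ω`. -/
structure IsPMF (p : Ω → ℝ) : Prop where
  nonneg : ∀ ω, 0 ≤ p ω
  sum_one : ∑ ω, p ω = 1

section Basic

variable {p : Ω → ℝ} {α β γ δ : Type*} [Fintype α] [DecidableEq α] [Fintype β] [DecidableEq β]
  [Fintype γ] [DecidableEq γ] [Fintype δ] [DecidableEq δ]

lemma prob_nonneg (hp : ∀ ω, 0 ≤ p ω) (T : Ω → α) (a : α) : 0 ≤ prob p T a :=
  Finset.sum_nonneg fun ω _ => by split_ifs <;> simp [hp ω]

lemma prob_le_prob_comp (hp : ∀ ω, 0 ≤ p ω) (T : Ω → α) (g : α → β) (a : α) :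
    prob p T a ≤ prob p (fun ω => g (T ω)) (g a) :=
  Finset.sum_le_sum fun ω _ => by
    by_cases h : T ω = a
    · simp [h]
    · split_ifs <;> simp [hp ω]

lemma prob_comp (T : Ω → α) {g : α → β} (hg : Function.Injective g) (a : α) :
    prob p (fun ω => g (T ω)) (g a) = prob p T a := by
  simp only [prob, hg.eq_iff]

lemma sum_mul_comp_eq_sum_prob_mul (T : Ω → α) (f : α → ℝ) :
    ∑ ω, p ω * f (T ω) = ∑ a, prob p T a * f a := by
  simp only [prob, Finset.sum_mul, ite_mul, zero_mul]
  rw [Finset.sum_comm]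
  simp

lemma sum_prob (T : Ω → α) : ∑ a, prob p T a = ∑ ω, p ω := by
  simpa using (sum_mul_comp_eq_sum_prob_mul (p := p) T fun _ => 1).symm

lemma sum_prob_pair_fst (T : Ω → α) (C : Ω → γ) (c : γ) :
    ∑ a, prob p (fun ω => (T ω, C ω)) (a, c) = prob p C c := by
  simp only [prob, Prod.mk.injEq]
  rw [Finset.sum_comm]
  refine Finset.sum_congr rfl fun ω _ => ?_
  by_cases h : C ω = c <;> simp [h]

lemma ent_comp_eq_sum (T : Ω → α) (g : α → β) :
    ent p (fun ω => g (T ω))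
      = -∑ a, prob p T a * Real.log (prob p (fun ω => g (T ω)) (g a)) := by
  rw [ent, ← sum_mul_comp_eq_sum_prob_mul (fun ω => g (T ω)), ← sum_mul_comp_eq_sum_prob_mul T]

lemma ent_comp (T : Ω → α) {g : α → β} (hg : Function.Injective g) :
    ent p (fun ω => g (T ω)) = ent p T := by
  rw [ent_comp_eq_sum, ent]
  simp only [prob_comp T hg]

lemma condMutInfo_eq_ent (X : Ω → α) (Y : Ω → β) (Z : Ω → γ) :
    condMutInfo p X Y Z
      = ent p (fun ω => (X ω, Z ω)) + ent p (fun ω => (Y ω, Z ω))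
        - ent p (fun ω => ((X ω, Y ω), Z ω)) - ent p Z := by
  simp only [condMutInfo, condEnt]
  ring

end Basic

section Relabel

variable {p : Ω → ℝ} {α β γ δ : Type*} [Fintype α] [DecidableEq α] [Fintype β] [DecidableEq β]
  [Fintype γ] [DecidableEq γ] [Fintype δ] [DecidableEq δ]

lemma condMutInfo_comp {α' β' γ' : Type*} [Fintype α'] [DecidableEq α'] [Fintype β']
    [DecidableEq β'] [Fintype γ'] [DecidableEq γ'] (X : Ω → α) (Y : Ω → β) (Z : Ω → γ)
    {f : α → α'} {g : β → β'} {h : γ → γ'} (hf : Function.Injective f)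
    (hg : Function.Injective g) (hh : Function.Injective h) :
    condMutInfo p (fun ω => f (X ω)) (fun ω => g (Y ω)) (fun ω => h (Z ω))
      = condMutInfo p X Y Z := by
  simp only [condMutInfo_eq_ent]
  rw [← ent_comp (fun ω => (X ω, Z ω)) (hf.prodMap hh),
    ← ent_comp (fun ω => (Y ω, Z ω)) (hg.prodMap hh),
    ← ent_comp (fun ω => ((X ω, Y ω), Z ω)) ((hf.prodMap hg).prodMap hh), ← ent_comp Z hh]
  rfl

lemma condMutInfo_comp_mid (X : Ω → α) (Y : Ω → β) (Z : Ω → γ) {g : β → δ}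
    (hg : Function.Injective g) :
    condMutInfo p X (fun ω => g (Y ω)) Z = condMutInfo p X Y Z :=
  condMutInfo_comp X Y Z (f := id) (h := id) Function.injective_id hg Function.injective_id

lemma condMutInfo_comp_cond (X : Ω → α) (Y : Ω → β) (Z : Ω → γ) {h : γ → δ}
    (hh : Function.Injective h) :
    condMutInfo p X Y (fun ω => h (Z ω)) = condMutInfo p X Y Z :=
  condMutInfo_comp X Y Z (f := id) (g := id) Function.injective_id Function.injective_id hh

lemma condMutInfo_comm (X : Ω → α) (Y : Ω → β) (Z : Ω → γ) :
    condMutInfo p X Y Z = condMutInfo p Y X Z := by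
  simp only [condMutInfo_eq_ent]
  rw [← ent_comp (fun ω => ((Y ω, X ω), Z ω))
    ((Equiv.prodComm β α).injective.prodMap Function.injective_id)]
  simp only [Equiv.prodComm_apply, Prod.map, Prod.swap_prod_mk, id]
  ring

lemma condMutInfo_prod_right (X : Ω → α) (Y : Ω → β) (Z : Ω → γ) (D : Ω → δ) :
    condMutInfo p X (fun ω => (Y ω, Z ω)) D
      = condMutInfo p X Z D + condMutInfo p X Y (fun ω => (Z ω, D ω)) := by
  simp only [condMutInfo_eq_ent]
  have hassoc : Function.Injective fun q : (α × β × γ) × δ => ((q.1.1, q.1.2.1), q.1.2.2, q.2) := by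
    rintro ⟨⟨a, b, c⟩, d⟩ ⟨⟨a', b', c'⟩, d'⟩ h
    simp_all
  rw [← ent_comp (fun ω => ((X ω, Y ω, Z ω), D ω)) hassoc,
    ← ent_comp (fun ω => (Y ω, Z ω, D ω)) (Equiv.prodAssoc β γ δ).symm.injective,
    ← ent_comp (fun ω => (X ω, Z ω, D ω)) (Equiv.prodAssoc α γ δ).symm.injective]
  simp only [Equiv.prodAssoc_symm_apply]
  ring

lemma condMutInfo_prod_left (X : Ω → α) (C : Ω → γ) (Y : Ω → β) (D : Ω → δ) :
    condMutInfo p (fun ω => (X ω, C ω)) Y D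
      = condMutInfo p C Y D + condMutInfo p X Y (fun ω => (C ω, D ω)) := by
  rw [condMutInfo_comm, condMutInfo_prod_right, condMutInfo_comm Y C,
    condMutInfo_comm Y X]

lemma condMutInfo_of_subsingleton [Subsingleton β] (X : Ω → α) (Y : Ω → β) (Z : Ω → γ) :
    condMutInfo p X Y Z = 0 := by
  have hXZ : Function.Injective fun q : (α × β) × γ => (q.1.1, q.2) :=
    fun q q' h => by
      simp only [Prod.mk.injEq] at h
      ext <;> simp [h.1, h.2, Subsingleton.elim q.1.2 q'.1.2]
  have hZ : Function.Injective fun q : β × γ => q.2 :=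
    fun q q' h => Prod.ext (Subsingleton.elim _ _) h
  rw [condMutInfo_eq_ent, ent_comp (fun ω => ((X ω, Y ω), Z ω)) hXZ,
    ent_comp (fun ω => (Y ω, Z ω)) hZ]
  ring

end Relabel

lemma sum_mul_log_div_nonneg {ι : Type*} [Fintype ι] {P Q : ι → ℝ} (hP : ∀ i, 0 ≤ P i)
    (hQ : ∀ i, 0 ≤ Q i) (hsum : ∑ i, Q i ≤ ∑ i, P i) (hpos : ∀ i, 0 < P i → 0 < Q i) :
    0 ≤ ∑ i, P i * Real.log (P i / Q i) := by
  have key : ∀ i, P i - Q i ≤ P i * Real.log (P i / Q i) := by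
    intro i
    rcases (hP i).eq_or_lt with h | h
    · simp [← h, hQ i]
    · have hQi := hpos i h
      calc P i - Q i = P i * (1 - (P i / Q i)⁻¹) := by field_simp
        _ ≤ P i * Real.log (P i / Q i) :=
          mul_le_mul_of_nonneg_left (Real.one_sub_inv_le_log_of_pos (by positivity)) h.le
  have := Finset.sum_le_sum fun i (_ : i ∈ Finset.univ) => key i
  rw [Finset.sum_sub_distrib] at this
  linarith

section Nonneg

variable {p : Ω → ℝ} {α β γ δ : Type*} [Fintype α] [DecidableEq α] [Fintype β] [DecidableEq β]
  [Fintype γ] [DecidableEq γ] [Fintype δ] [DecidableEq δ]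

lemma condMutInfo_eq_sum_mul_log (hp : ∀ ω, 0 ≤ p ω) (X : Ω → α) (Y : Ω → β) (Z : Ω → γ) :
    condMutInfo p X Y Z
      = ∑ q : (α × β) × γ, prob p (fun ω => ((X ω, Y ω), Z ω)) q *
          Real.log (prob p (fun ω => ((X ω, Y ω), Z ω)) q /
            (prob p (fun ω => (X ω, Z ω)) (q.1.1, q.2) *
              prob p (fun ω => (Y ω, Z ω)) (q.1.2, q.2) / prob p Z q.2)) := by
  have key : ∀ q : (α × β) × γ, prob p (fun ω => ((X ω, Y ω), Z ω)) q *
        Real.log (prob p (fun ω => ((X ω, Y ω), Z ω)) q /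
          (prob p (fun ω => (X ω, Z ω)) (q.1.1, q.2) *
            prob p (fun ω => (Y ω, Z ω)) (q.1.2, q.2) / prob p Z q.2))
      = prob p (fun ω => ((X ω, Y ω), Z ω)) q *
          Real.log (prob p (fun ω => ((X ω, Y ω), Z ω)) q)
        - prob p (fun ω => ((X ω, Y ω), Z ω)) q *
          Real.log (prob p (fun ω => (X ω, Z ω)) (q.1.1, q.2))
        - prob p (fun ω => ((X ω, Y ω), Z ω)) q *
          Real.log (prob p (fun ω => (Y ω, Z ω)) (q.1.2, q.2))
        + prob p (fun ω => ((X ω, Y ω), Z ω)) q * Real.log (prob p Z q.2) := by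
    intro q
    rcases (prob_nonneg hp (fun ω => ((X ω, Y ω), Z ω)) q).eq_or_lt with h | h
    · simp [← h]
    have hXZ := h.trans_le (prob_le_prob_comp hp _ (fun q : (α × β) × γ => (q.1.1, q.2)) q)
    have hYZ := h.trans_le (prob_le_prob_comp hp _ (fun q : (α × β) × γ => (q.1.2, q.2)) q)
    have hZ := h.trans_le (prob_le_prob_comp hp _ (fun q : (α × β) × γ => q.2) q)
    rw [Real.log_div h.ne' (by positivity), Real.log_div (by positivity) hZ.ne',
      Real.log_mul hXZ.ne' hYZ.ne']
    ring
  rw [Finset.sum_congr rfl fun q _ => key q, condMutInfo_eq_ent,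
    ent_comp_eq_sum (fun ω => ((X ω, Y ω), Z ω)) (fun q => (q.1.1, q.2)),
    ent_comp_eq_sum (fun ω => ((X ω, Y ω), Z ω)) (fun q => (q.1.2, q.2)),
    ent_comp_eq_sum (fun ω => ((X ω, Y ω), Z ω)) (fun q => q),
    ent_comp_eq_sum (fun ω => ((X ω, Y ω), Z ω)) (fun q => q.2)]
  simp only [Finset.sum_add_distrib, Finset.sum_sub_distrib]
  ring

lemma sum_prob_mul_prob_div_prob (X : Ω → α) (Y : Ω → β) (Z : Ω → γ) :
    ∑ q : (α × β) × γ, prob p (fun ω => (X ω, Z ω)) (q.1.1, q.2) *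
        prob p (fun ω => (Y ω, Z ω)) (q.1.2, q.2) / prob p Z q.2 = ∑ ω, p ω := by
  rw [← sum_prob Z, Fintype.sum_prod_type, Finset.sum_comm]
  refine Finset.sum_congr rfl fun c _ => ?_
  rw [Fintype.sum_prod_type]
  simp only [← Finset.sum_div, ← Finset.mul_sum, ← Finset.sum_mul, sum_prob_pair_fst,
    mul_self_div_self]

lemma condMutInfo_nonneg (hp : ∀ ω, 0 ≤ p ω) (X : Ω → α) (Y : Ω → β) (Z : Ω → γ) :
    0 ≤ condMutInfo p X Y Z := by
  rw [condMutInfo_eq_sum_mul_log hp]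
  refine sum_mul_log_div_nonneg (prob_nonneg hp _) (fun q => by
    have := prob_nonneg hp Z q.2
    have := prob_nonneg hp (fun ω => (X ω, Z ω)) (q.1.1, q.2)
    have := prob_nonneg hp (fun ω => (Y ω, Z ω)) (q.1.2, q.2)
    positivity) ?_ fun q h => ?_
  · rw [sum_prob_mul_prob_div_prob, sum_prob]
  · have := h.trans_le (prob_le_prob_comp hp _ (fun q : (α × β) × γ => (q.1.1, q.2)) q)
    have := h.trans_le (prob_le_prob_comp hp _ (fun q : (α × β) × γ => (q.1.2, q.2)) q)
    have := h.trans_le (prob_le_prob_comp hp _ (fun q : (α × β) × γ => q.2) q)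
    positivity

lemma condMutInfo_le_prod_left (hp : ∀ ω, 0 ≤ p ω) (X : Ω → α) (Y : Ω → β) (C : Ω → γ)
    (D : Ω → δ) :
    condMutInfo p X Y (fun ω => (C ω, D ω)) ≤ condMutInfo p (fun ω => (X ω, C ω)) Y D := by
  rw [condMutInfo_prod_left]
  linarith [condMutInfo_nonneg hp C Y D]

end Nonneg

section Markov

variable {p : Ω → ℝ} {α β γ δ : Type*} [Fintype α] [DecidableEq α] [Fintype β] [DecidableEq β]
  [Fintype γ] [DecidableEq γ] [Fintype δ] [DecidableEq δ]

lemma condMutInfo_eq_zero_of_markovChain (hp : ∀ ω, 0 ≤ p ω) {U : Ω → α} {X : Ω → β}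
    {V : Ω → γ} (hmk : MarkovChain p U X V) : condMutInfo p U V X = 0 := by
  rw [condMutInfo_eq_sum_mul_log hp]
  refine Finset.sum_eq_zero fun ⟨⟨u, v⟩, x⟩ _ => ?_
  have hUVX : prob p (fun ω => ((U ω, V ω), X ω)) ((u, v), x)
      = prob p (fun ω => (U ω, X ω, V ω)) (u, x, v) :=
    prob_comp (fun ω => (U ω, X ω, V ω))
      (g := fun q : α × β × γ => ((q.1, q.2.2), q.2.1))
      (by rintro ⟨a, b, c⟩ ⟨a', b', c'⟩ h; simp_all) (u, x, v)
  have hVX : prob p (fun ω => (V ω, X ω)) (v, x) = prob p (fun ω => (X ω, V ω)) (x, v) :=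
    prob_comp (fun ω => (X ω, V ω)) (Equiv.prodComm β γ).injective (x, v)
  rcases (prob_nonneg hp (fun ω => ((U ω, V ω), X ω)) ((u, v), x)).eq_or_lt with h | h
  · simp [← h]
  have hX := h.trans_le (prob_le_prob_comp hp _ (fun q : (α × γ) × β => q.2) ((u, v), x))
  rw [hUVX] at h ⊢
  rw [hVX, ← hmk u x v, mul_div_cancel_right₀ _ hX.ne', div_self h.ne', Real.log_one, mul_zero]

lemma condMutInfo_le_of_markovChain (hp : ∀ ω, 0 ≤ p ω) {U : Ω → α} {X : Ω → β}
    {Y : Ω → γ} {Z : Ω → δ} (hmk : MarkovChain p U X (fun ω => (Y ω, Z ω))) :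
    condMutInfo p U Y Z ≤ condMutInfo p X Y Z := by
  have hUYZX : condMutInfo p U Y (fun ω => (Z ω, X ω)) ≤ 0 := by
    have := condMutInfo_prod_right (p := p) U Y Z X
    rw [condMutInfo_eq_zero_of_markovChain hp hmk] at this
    linarith [condMutInfo_nonneg hp U Z X]
  have hXZ : condMutInfo p U Y (fun ω => (X ω, Z ω)) = condMutInfo p U Y (fun ω => (Z ω, X ω)) :=
    condMutInfo_comp_cond (h := Prod.swap) U Y (fun ω => (Z ω, X ω)) Prod.swap_injective
  have hXU : condMutInfo p (fun ω => (X ω, U ω)) Y Z = condMutInfo p (fun ω => (U ω, X ω)) Y Z :=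
    condMutInfo_comp (fun ω => (U ω, X ω)) Y Z (f := Prod.swap) (g := id) (h := id)
      Prod.swap_injective Function.injective_id Function.injective_id
  have h₁ := condMutInfo_prod_left (p := p) X U Y Z
  have h₂ := condMutInfo_prod_left (p := p) U X Y Z
  linarith [condMutInfo_nonneg hp X Y (fun ω => (U ω, Z ω))]

end Markov

section ChainRule

variable {p : Ω → ℝ} {α β γ δ : Type*} [Fintype α] [DecidableEq α] [Fintype β] [DecidableEq β]
  [Fintype γ] [DecidableEq γ] [Fintype δ] [DecidableEq δ]

lemma condMutInfo_comp_surjective_cond {ι κ : Type*} [Fintype ι] [DecidableEq ι] [Fintype κ]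
    [DecidableEq κ] (X : Ω → α) (Y : Ω → β) (V : ι → Ω → δ) (C : Ω → γ) {σ : κ → ι}
    (hσ : Function.Surjective σ) :
    condMutInfo p X Y (fun ω => ((fun k => V (σ k) ω), C ω))
      = condMutInfo p X Y (fun ω => ((fun i => V i ω), C ω)) :=
  condMutInfo_comp_cond X Y (fun ω => ((fun i => V i ω), C ω)) (h := Prod.map (· ∘ σ) id)
    (hσ.injective_comp_right.prodMap Function.injective_id)

lemma condMutInfo_pi_eq_sum {n : ℕ} (X : Ω → α) (Y : Fin n → Ω → β) (C : Ω → γ) :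
    condMutInfo p X (fun ω i => Y i ω) C
      = ∑ i, condMutInfo p X (Y i) (fun ω => ((fun j : {j : Fin n // i < j} => Y j ω), C ω)) := by
  induction n with
  | zero => rw [condMutInfo_of_subsingleton, Fin.sum_univ_zero]
  | succ n ih =>
    have hcons : (fun ω i => Y i ω)
        = fun ω => Fin.consEquiv (fun _ => β) (Y 0 ω, fun i => Y i.succ ω) := by
      funext ω
      exact (Fin.cons_self_tail fun i => Y i ω).symm
    have hzero : Function.Surjective fun i : Fin n =>
        (⟨i.succ, i.succ_pos⟩ : {j : Fin (n + 1) // 0 < j}) :=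
      fun j => ⟨j.1.pred j.2.ne', Subtype.ext (Fin.succ_pred _ j.2.ne')⟩
    have hsucc (i : Fin n) : Function.Surjective fun j : {j : Fin n // i < j} =>
        (⟨j.1.succ, Fin.succ_lt_succ_iff.2 j.2⟩ : {j : Fin (n + 1) // i.succ < j}) := fun j =>
      have hj : j.1 ≠ 0 := (Fin.succ_pos i).trans j.2 |>.ne'
      ⟨⟨j.1.pred hj, by rw [← Fin.succ_lt_succ_iff, Fin.succ_pred]; exact j.2⟩,
        Subtype.ext (Fin.succ_pred _ hj)⟩
    rw [hcons, condMutInfo_comp_mid X _ C (Fin.consEquiv fun _ => β).injective,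
      condMutInfo_prod_right, ih (fun i => Y i.succ), Fin.sum_univ_succ, add_comm]
    congr 1
    -- `(e :)` elaborates `e` before unifying with the goal, which is much faster here
    · exact (condMutInfo_comp_surjective_cond X (Y 0)
        (fun j : {j : Fin (n + 1) // 0 < j} => Y j.1) C hzero :)
    · exact Finset.sum_congr rfl fun i _ => (condMutInfo_comp_surjective_cond X
        (Y i.succ) (fun j : {j : Fin (n + 1) // i.succ < j} => Y j.1) C (hsucc i) :)

end ChainRule

lemma funext_of_lt_of_gt {ι β : Type*} [LinearOrder ι] {z z' : ι → β} (i : ι)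
    (hlt : ∀ j < i, z j = z' j) (heq : z i = z' i) (hgt : ∀ j, i < j → z j = z' j) :
    z = z' :=
  funext fun j => (lt_trichotomy j i).elim (hlt j) fun h => h.elim (fun h => h ▸ heq) (hgt j)

theorem statement12_general {Ω : Type*} [Fintype Ω] {p : Ω → ℝ} (hp : IsPMF p)
    {A 𝒳 𝒴 𝒵 : Type*} [Fintype A] [DecidableEq A] [Fintype 𝒳] [DecidableEq 𝒳]
    [Fintype 𝒴] [DecidableEq 𝒴] [Fintype 𝒵] [DecidableEq 𝒵]
    (n : ℕ) (M : Ω → A) (X : Fin n → Ω → 𝒳) (Y : Fin n → Ω → 𝒴) (Z : Fin n → Ω → 𝒵)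
    (hmarkov : ∀ i : Fin n,
      MarkovChain p
        (fun ω => (M ω, (fun j : {j : Fin n // i < j} => Y j ω),
                   (fun j : {j : Fin n // j < i} => Z j ω),
                   (fun j : {j : Fin n // i < j} => Z j ω)))
        (X i) (fun ω => (Y i ω, Z i ω))) :
    condMutInfo p M (fun ω => fun i => Y i ω) (fun ω => fun i => Z i ω)
      ≤ ∑ i, condMutInfo p (X i) (Y i) (Z i) := by
  rw [condMutInfo_pi_eq_sum]
  refine Finset.sum_le_sum fun i _ => ?_
  have hsplit : Function.Injective fun q : ({j : Fin n // i < j} → 𝒴) × (Fin n → 𝒵) =>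
      ((q.1, (fun j : {j : Fin n // j < i} => q.2 j), (fun j : {j : Fin n // i < j} => q.2 j)),
        q.2 i) := by
    rintro ⟨y, z⟩ ⟨y', z'⟩ h
    simp only [Prod.mk.injEq, funext_iff, Subtype.forall] at h
    obtain ⟨⟨hy, hlt, hgt⟩, hi⟩ := h
    exact Prod.ext (funext fun j => hy j.1 j.2) (funext_of_lt_of_gt i hlt hi hgt)
  let W ω := ((fun j : {j : Fin n // i < j} => Y j ω), (fun j : {j : Fin n // j < i} => Z j ω),
    (fun j : {j : Fin n // i < j} => Z j ω))
  calc condMutInfo p M (Y i) (fun ω => ((fun j : {j : Fin n // i < j} => Y j ω), fun k => Z k ω))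
      = condMutInfo p M (Y i) (fun ω => (W ω, Z i ω)) :=
        (condMutInfo_comp_cond M (Y i) _ hsplit).symm
    _ ≤ condMutInfo p (fun ω => (M ω, W ω)) (Y i) (Z i) := by
        -- the `DecidableEq` instances on these tuple types elaborate to `Classical.propDecidable`
        -- here but to `instDecidableEqProd` in the lemma; `convert` identifies them
        convert condMutInfo_le_prod_left hp.nonneg M (Y i) W (Z i) using 2
    _ ≤ condMutInfo p (X i) (Y i) (Z i) := condMutInfo_le_of_markovChain hp.nonneg (hmarkov i)

/-- Single-letterization: for a memoryless broadcast channel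
`p(yⁿ,zⁿ|xⁿ) = ∏ᵢ W(yᵢ,zᵢ|xᵢ)` with the Markov chains
`(M, Y_{i+1..n}, Z^{i-1}, Z_{i+1..n}) → Xᵢ → (Yᵢ, Zᵢ)`,
one has `I(M; Yⁿ | Zⁿ) ≤ ∑ᵢ I(Xᵢ; Yᵢ | Zᵢ)`. -/
theorem statement12 {Ω : Type*} [Fintype Ω] {p : Ω → ℝ} (hp : IsPMF p)
    {A 𝒳 𝒴 𝒵 : Type*} [Fintype A] [DecidableEq A] [Fintype 𝒳] [DecidableEq 𝒳]
    [Fintype 𝒴] [DecidableEq 𝒴] [Fintype 𝒵] [DecidableEq 𝒵]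
    (n : ℕ) (M : Ω → A) (X : Fin n → Ω → 𝒳) (Y : Fin n → Ω → 𝒴) (Z : Fin n → Ω → 𝒵)
    (W : 𝒳 → 𝒴 × 𝒵 → ℝ)
    (hW0 : ∀ x yz, 0 ≤ W x yz)
    (hW1 : ∀ x, ∑ yz : 𝒴 × 𝒵, W x yz = 1)
    (hmemoryless : ∀ (m : A) (x : Fin n → 𝒳) (y : Fin n → 𝒴) (z : Fin n → 𝒵),
      prob p (fun ω => (M ω, (fun i => X i ω), (fun i => Y i ω), (fun i => Z i ω)))
          (m, x, y, z)
        = prob p (fun ω => (M ω, (fun i => X i ω))) (m, x) * ∏ i, W (x i) (y i, z i))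
    (hmarkov : ∀ i : Fin n,
      MarkovChain p
        (fun ω => (M ω, (fun j : {j : Fin n // i < j} => Y j ω),
                   (fun j : {j : Fin n // j < i} => Z j ω),
                   (fun j : {j : Fin n // i < j} => Z j ω)))
        (X i) (fun ω => (Y i ω, Z i ω))) :
    condMutInfo p M (fun ω => fun i => Y i ω) (fun ω => fun i => Z i ω)
      ≤ ∑ i, condMutInfo p (X i) (Y i) (Z i) :=
  statement12_general hp n M X Y Z hmarkov

end SecBC
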